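/- For every graph G, the critical difference satisfies d(G) ≥ α(G) - μ(G). -/

import Mathlib

open SimpleGraph

variable {V : Type*}

/-- A set of vertices is independent: no two of its vertices are adjacent. -/
def IsIndep (G : SimpleGraph V) (s : Set V) : Prop :=
  s.Pairwise fun a b => ¬ G.Adj a b

/-- The independence number α(G). -/
noncomputable def alphaNum (G : SimpleGraph V) : ℕ :=
  sSup {n | ∃ s : Set V, IsIndep G s ∧ s.ncard = n}

/-- The matching number μ(G). -/
noncomputable def muNum (G : SimpleGraph V) : ℕ :=
  sSup {n | ∃ M : SimpleGraph.Subgraph G, M.IsMatching ∧ M.edgeSet.ncard = n}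

/-- The neighborhood N(A) of a set of vertices. -/
def nbhd (G : SimpleGraph V) (A : Set V) : Set V := {v | ∃ a ∈ A, G.Adj a v}

/-- The difference d(A) = |A| - |N(A)| of a set of vertices. -/
noncomputable def diffSet (G : SimpleGraph V) (A : Set V) : ℤ :=
  (A.ncard : ℤ) - (nbhd G A).ncard

/-- The critical difference d(G). -/
noncomputable def critDiff (G : SimpleGraph V) : ℤ :=
  sSup {d | ∃ I : Set V, IsIndep G I ∧ diffSet G I = d}

/-- A critical independent set: an independent set attaining the critical difference. -/
def IsCriticalIndep (G : SimpleGraph V) (A : Set V) : Prop :=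
  IsIndep G A ∧ diffSet G A = critDiff G

/-- ker(G): the intersection of all critical independent sets. -/
noncomputable def kerSet (G : SimpleGraph V) : Set V :=
  ⋂₀ {A | IsCriticalIndep G A}

/-- A maximum independent set. -/
noncomputable def IsMaxIndep (G : SimpleGraph V) (S : Set V) : Prop :=
  IsIndep G S ∧ S.ncard = alphaNum G

/-- core(G): the intersection of all maximum independent sets. -/
noncomputable def coreSet (G : SimpleGraph V) : Set V :=
  ⋂₀ {S | IsMaxIndep G S}

/-- A König–Egerváry graph: α(G) + μ(G) = n(G). -/
def KonigEgervary (G : SimpleGraph V) : Prop :=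
  alphaNum G + muNum G = Nat.card V

/-!
Let `S` be a maximum independent set and `k = d(G)`. Every `A ⊆ S` is independent, so
`|N(A)| ≥ |A| - k`; by the deficiency version of Hall's theorem, all but at most `k` vertices of
`S` can be matched injectively to neighbours, which lie outside `S`. This is a matching of size
at least `α(G) - d(G)`.
-/

namespace Finset

theorem exists_injective_of_all_card_le_biUnion_card_add {ι α : Type*} [Fintype ι]
    [DecidableEq α] (t : ι → Finset α) (k : ℕ)
    (ht : ∀ A : Finset ι, #A ≤ #(A.biUnion t) + k) :
    ∃ (s : Finset ι) (f : s → α), Function.Injective f ∧ (∀ i : s, f i ∈ t i) ∧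
      Fintype.card ι ≤ #s + k := by
  -- Hall's condition holds once `k` new elements are added to every `t i`.
  obtain ⟨f, hf, hft⟩ := (all_card_le_biUnion_card_iff_exists_injective
      fun i => (t i).disjSum (univ : Finset (Fin k))).1 fun A => by
    rcases A.eq_empty_or_nonempty with rfl | hA
    · simp
    · have : A.biUnion (fun i => (t i).disjSum (univ : Finset (Fin k))) =
          (A.biUnion t).disjSum univ := by
        ext (a | j) <;> simp [hA.exists_mem]
      rw [this, card_disjSum, card_univ, Fintype.card_fin]
      exact ht A
  let s := univ.filter fun i => (f i).isLeft
  refine ⟨s, fun i => (f i).getLeft (mem_filter.1 i.2).2, fun i j hij => ?_, fun i => ?_, ?_⟩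
  · have := congrArg (Sum.inl (β := Fin k)) hij
    simp only [Sum.inl_getLeft] at this
    exact Subtype.ext (hf this)
  · rw [← inl_mem_disjSum (t := (univ : Finset (Fin k))), Sum.inl_getLeft]
    exact hft i
  · have hright : #(univ.filter fun i => ¬ (f i).isLeft) ≤ k := by
      calc _ ≤ #((univ : Finset (Fin k)).map .inr) := card_le_card_of_injOn f ?_ hf.injOn
        _ = k := by simp
      intro i hi
      cases h : f i <;> simp_all
    have := card_filter_add_card_filter_not (s := univ) fun i => (f i).isLeft
    rw [card_univ] at this
    change Fintype.card ι ≤ #(univ.filter fun i => (f i).isLeft) + k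
    omega

end Finset

namespace SimpleGraph.Subgraph

variable {G : SimpleGraph V} {M : G.Subgraph}

theorem IsMatching.ncard_verts_le_two_mul [Finite V] (hM : M.IsMatching) :
    M.verts.ncard ≤ 2 * M.edgeSet.ncard := by
  have hedge : ∀ e : Sym2 V, (e : Set V).ncard ≤ 2 := fun e =>
    Sym2.ind (fun a b => by simpa using Set.ncard_insert_le a {b}) e
  have h := M.edgeSet.toFinite.toFinset.set_ncard_biUnion_le fun e : Sym2 V => (e : Set V)
  simp only [Set.Finite.mem_toFinset] at h
  rw [hM.verts_eq_biUnion_edgeSet, Set.ncard_eq_toFinset_card _ M.edgeSet.toFinite, mul_comm]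
  exact h.trans (Finset.sum_le_card_nsmul _ _ _ fun e _ => hedge e)

theorem exists_isMatching_card_le_ncard_edgeSet [Finite V] {ι : Type*} {u w : ι → V}
    (hu : Function.Injective u) (hw : Function.Injective w)
    (hdisj : Disjoint (Set.range u) (Set.range w)) (hadj : ∀ i, G.Adj (u i) (w i)) :
    ∃ M : G.Subgraph, M.IsMatching ∧ Nat.card ι ≤ M.edgeSet.ncard := by
  let e : Set.range u ≃ Set.range w :=
    (Equiv.ofInjective u hu).symm.trans (Equiv.ofInjective w hw)
  obtain ⟨M, hverts, hM⟩ := IsMatching.exists_of_disjoint_sets_of_equiv hdisj e <| by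
    rintro ⟨_, i, rfl⟩
    simpa [e, Equiv.ofInjective_symm_apply] using hadj i
  refine ⟨M, hM, ?_⟩
  have := hM.ncard_verts_le_two_mul
  rw [hverts, Set.ncard_union_eq hdisj, Set.ncard_range_of_injective hu,
    Set.ncard_range_of_injective hw] at this
  omega

end SimpleGraph.Subgraph

section

variable {G : SimpleGraph V}

theorem IsIndep.mono {s t : Set V} (ht : IsIndep G t) (hst : s ⊆ t) : IsIndep G s :=
  Set.Pairwise.mono hst ht

theorem diffSet_empty : diffSet G ∅ = 0 := by
  simp [diffSet, nbhd]

theorem diffSet_le_critDiff [Finite V] {I : Set V} (hI : IsIndep G I) :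
    diffSet G I ≤ critDiff G := by
  refine le_csSup ⟨Nat.card V, ?_⟩ ⟨I, hI, rfl⟩
  rintro _ ⟨J, -, rfl⟩
  have := J.ncard_le_card
  simp only [diffSet]
  omega

theorem critDiff_nonneg [Finite V] : 0 ≤ critDiff G :=
  diffSet_empty (G := G) ▸ diffSet_le_critDiff (Set.pairwise_empty _)

theorem ncard_edgeSet_le_muNum [Finite V] {M : G.Subgraph} (hM : M.IsMatching) :
    M.edgeSet.ncard ≤ muNum G := by
  refine le_csSup ⟨Nat.card (Sym2 V), ?_⟩ ⟨M, hM, rfl⟩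
  rintro _ ⟨N, -, rfl⟩
  exact N.edgeSet.ncard_le_card

theorem exists_isIndep_ncard_eq_alphaNum [Finite V] :
    ∃ S : Set V, IsIndep G S ∧ S.ncard = alphaNum G := by
  refine Nat.sSup_mem (s := {n | ∃ S : Set V, IsIndep G S ∧ S.ncard = n})
    ⟨0, ∅, Set.pairwise_empty _, Set.ncard_empty _⟩ ⟨Nat.card V, ?_⟩
  rintro _ ⟨S, -, rfl⟩
  exact S.ncard_le_card

theorem IsIndep.ncard_le_muNum_add [Finite V] {S : Set V} (hS : IsIndep G S) (k : ℕ)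
    (hk : ∀ A ⊆ S, A.ncard ≤ (nbhd G A).ncard + k) : S.ncard ≤ muNum G + k := by
  classical
  have := Fintype.ofFinite V
  obtain ⟨s, f, hf, hft, hcard⟩ := Finset.exists_injective_of_all_card_le_biUnion_card_add
      (fun a : S => G.neighborFinset a) k fun A => by
    have hnbhd : nbhd G (Subtype.val '' (A : Set S)) =
        ↑(A.biUnion fun a => G.neighborFinset a) := by
      ext v
      simp [nbhd]
    have := hk _ (Subtype.coe_image_subset S A)
    rwa [hnbhd, Set.ncard_coe_finset, Set.ncard_image_of_injective _ Subtype.val_injective,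
      Set.ncard_coe_finset] at this
  have hadj : ∀ i : s, G.Adj i (f i) := fun i => (mem_neighborFinset ..).1 (hft i)
  have hdisj : Disjoint (Set.range fun i : s => (i : V)) (Set.range f) := by
    rw [Set.disjoint_left]
    rintro _ ⟨i, rfl⟩ ⟨j, hj⟩
    have h := hadj j
    rw [hj] at h
    exact hS j.1.2 i.1.2 h.ne h
  obtain ⟨M, hM, hMcard⟩ := Subgraph.exists_isMatching_card_le_ncard_edgeSet
    (Subtype.val_injective.comp Subtype.val_injective) hf hdisj hadj
  have := ncard_edgeSet_le_muNum hM
  rw [← Nat.card_coe_set_eq, Nat.card_eq_fintype_card]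
  rw [Nat.card_eq_fintype_card, Fintype.card_coe] at hMcard
  omega

end

theorem stmt_9 [Fintype V] (G : SimpleGraph V) :
    (alphaNum G : ℤ) - (muNum G : ℤ) ≤ critDiff G := by
  obtain ⟨S, hS, hSα⟩ := exists_isIndep_ncard_eq_alphaNum (G := G)
  have hdeficiency : ∀ A ⊆ S, A.ncard ≤ (nbhd G A).ncard + (critDiff G).toNat := by
    intro A hA
    have hdiff := diffSet_le_critDiff (hS.mono hA)
    have := Int.self_le_toNat (critDiff G)
    simp only [diffSet] at hdiff
    omega
  have := hS.ncard_le_muNum_add _ hdeficiency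
  have := Int.toNat_of_nonneg (critDiff_nonneg (G := G))
  omega
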